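/- Let G = Z[1/p] ⋊ Z (|p| > 1) with finite symmetric generating set C, and let c > 0 be the maximal Z-coordinate among generators, realized by a generator (f_*, c). Fix j ≥ 1, let ℓ = ℓ_C((1,0)), and for k > j define α_k = (p^{−kc}+p^{kc}, 0)·(f_*,c)^{−j} and β_k = (p^{kc}+p^{−kc}, 0)·(f_*,c)^{j}. Then α_k, β_k ∈ B(4k + 2ℓ − j) and d_C(α_k, β_k) ≤ 2j. -/

import Mathlib

namespace BS

/-- `Zp p` is the set of `p`-adic fractions `m / p^n` inside `ℚ`, i.e. `ℤ[1/p]`. -/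
def Zp (p : ℤ) : Set ℚ := {q | ∃ (m : ℤ) (n : ℕ), q = (m : ℚ) / (p : ℚ) ^ n}

lemma zero_mem (p : ℤ) : (0 : ℚ) ∈ Zp p := ⟨0, 0, by norm_num⟩

lemma one_mem (p : ℤ) : (1 : ℚ) ∈ Zp p := ⟨1, 0, by norm_num⟩

lemma cast_ne_zero {p : ℤ} (h : 1 < |p|) : (p : ℚ) ≠ 0 := by
  have hp : p ≠ 0 := by rintro rfl; simp at h
  exact_mod_cast hp

lemma neg_mem {p : ℤ} {q : ℚ} (hq : q ∈ Zp p) : -q ∈ Zp p := by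
  obtain ⟨m, n, rfl⟩ := hq
  exact ⟨-m, n, by push_cast; ring⟩

lemma add_mem {p : ℤ} (hp : (p : ℚ) ≠ 0) {q r : ℚ} (hq : q ∈ Zp p) (hr : r ∈ Zp p) :
    q + r ∈ Zp p := by
  obtain ⟨m1, n1, rfl⟩ := hq
  obtain ⟨m2, n2, rfl⟩ := hr
  refine ⟨m1 * p ^ n2 + m2 * p ^ n1, n1 + n2, ?_⟩
  push_cast
  field_simp
  rw [pow_add]; ring

lemma zpow_mul_mem {p : ℤ} (hp : (p : ℚ) ≠ 0) (e : ℤ) {q : ℚ} (hq : q ∈ Zp p) :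
    (p : ℚ) ^ e * q ∈ Zp p := by
  obtain ⟨m, n, rfl⟩ := hq
  obtain ⟨k, hk | hk⟩ := e.eq_nat_or_neg
  · subst hk
    refine ⟨m * p ^ k, n, ?_⟩
    push_cast [zpow_natCast]
    field_simp
  · subst hk
    refine ⟨m, n + k, ?_⟩
    rw [zpow_neg, zpow_natCast]
    push_cast
    field_simp
    rw [pow_add]; ring

lemma zpow_mem {p : ℤ} (hp : (p : ℚ) ≠ 0) (e : ℤ) : (p : ℚ) ^ e ∈ Zp p := by
  simpa using zpow_mul_mem hp e (one_mem p)

lemma sub_mem {p : ℤ} (hp : (p : ℚ) ≠ 0) {q r : ℚ} (hq : q ∈ Zp p) (hr : r ∈ Zp p) :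
    q - r ∈ Zp p := by
  simpa [sub_eq_add_neg] using add_mem hp hq (neg_mem hr)

/-- The underlying type of the semidirect product `ℚ ⋊ ℤ` (with `ℤ` acting by
multiplication by `p`); `f` is the `ℚ`-coordinate and `c` the `ℤ`-coordinate. -/
@[ext] structure QZ (p : ℤ) where
  f : ℚ
  c : ℤ

instance (p : ℤ) [hF : Fact (1 < |p|)] : Group (QZ p) where
  mul x y := ⟨x.f + (p : ℚ) ^ (-x.c) * y.f, x.c + y.c⟩
  one := ⟨0, 0⟩
  inv x := ⟨-((p : ℚ) ^ x.c * x.f), -x.c⟩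
  mul_assoc x y z := by
    have hp := cast_ne_zero hF.out
    refine QZ.ext ?_ ?_
    · show (x.f + (p : ℚ) ^ (-x.c) * y.f) + (p : ℚ) ^ (-(x.c + y.c)) * z.f
        = x.f + (p : ℚ) ^ (-x.c) * (y.f + (p : ℚ) ^ (-y.c) * z.f)
      rw [neg_add, zpow_add₀ hp]
      ring
    · show (x.c + y.c) + z.c = x.c + (y.c + z.c); ring
  one_mul x := by
    refine QZ.ext ?_ ?_
    · show (0 : ℚ) + (p : ℚ) ^ (-(0 : ℤ)) * x.f = x.f
      simp
    · show (0 : ℤ) + x.c = x.c; simp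
  mul_one x := by
    refine QZ.ext ?_ ?_
    · show x.f + (p : ℚ) ^ (-x.c) * 0 = x.f
      simp
    · show x.c + (0 : ℤ) = x.c; simp
  inv_mul_cancel x := by
    have hp := cast_ne_zero hF.out
    refine QZ.ext ?_ ?_
    · show -((p : ℚ) ^ x.c * x.f) + (p : ℚ) ^ (-(-x.c)) * x.f = 0
      rw [neg_neg]
      ring
    · show -x.c + x.c = (0 : ℤ); ring

@[simp] lemma mul_f {p : ℤ} [Fact (1 < |p|)] (x y : QZ p) :
    (x * y).f = x.f + (p : ℚ) ^ (-x.c) * y.f := rfl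

@[simp] lemma mul_c {p : ℤ} [Fact (1 < |p|)] (x y : QZ p) : (x * y).c = x.c + y.c := rfl

@[simp] lemma one_f {p : ℤ} [Fact (1 < |p|)] : (1 : QZ p).f = 0 := rfl
@[simp] lemma one_c {p : ℤ} [Fact (1 < |p|)] : (1 : QZ p).c = 0 := rfl
@[simp] lemma inv_f {p : ℤ} [Fact (1 < |p|)] (x : QZ p) :
    (x⁻¹).f = -((p : ℚ) ^ x.c * x.f) := rfl
@[simp] lemma inv_c {p : ℤ} [Fact (1 < |p|)] (x : QZ p) : (x⁻¹).c = -x.c := rfl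

/-- The group `G = ℤ[1/p] ⋊ ℤ`, as a subgroup of `ℚ ⋊ ℤ`. -/
def HZ (p : ℤ) [hF : Fact (1 < |p|)] : Subgroup (QZ p) where
  carrier := {x | x.f ∈ Zp p}
  mul_mem' {a b} ha hb :=
    add_mem (cast_ne_zero hF.out) ha (zpow_mul_mem (cast_ne_zero hF.out) _ hb)
  one_mem' := zero_mem p
  inv_mem' {a} ha := neg_mem (zpow_mul_mem (cast_ne_zero hF.out) _ ha)

/-- Build an element of `ℤ[1/p] ⋊ ℤ`. -/
def mk {p : ℤ} [Fact (1 < |p|)] (f : ℚ) (c : ℤ) (h : f ∈ Zp p) : HZ p := ⟨⟨f, c⟩, h⟩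

/-- The ball of radius `n` in the Cayley graph of a group with generating set `C`. -/
def ball {H : Type*} [Group H] (C : Set H) (n : ℕ) : Set H :=
  {g | ∃ l : List H, (∀ x ∈ l, x ∈ C) ∧ l.prod = g ∧ l.length ≤ n}

/-- `C` generates the group `H`. -/
def Generates {H : Type*} [Group H] (C : Set H) : Prop :=
  ∀ g : H, ∃ l : List H, (∀ x ∈ l, x ∈ C) ∧ l.prod = g

/-- `C` is symmetric (closed under inverses). -/
def Symm {H : Type*} [Group H] (C : Set H) : Prop := ∀ x ∈ C, x⁻¹ ∈ C

/-- Word length with respect to the generating set `C`. -/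
noncomputable def wl {H : Type*} [Group H] (C : Set H) (g : H) : ℕ :=
  sInf {n | g ∈ ball C n}

/-- `G` is almost convex with respect to `C`: for every `k` there is `N` such that any two
points of `B(n)` at distance at most `k` are joined by a path of length at most `N`
staying inside `B(n)`. -/
def AlmostConvex {H : Type*} [Group H] (C : Set H) : Prop :=
  ∀ k : ℕ, ∃ N : ℕ, ∀ n : ℕ, ∀ g g' : H, g ∈ ball C n → g' ∈ ball C n →
    g⁻¹ * g' ∈ ball C k →
    ∃ l : List H, (∀ x ∈ l, x ∈ C) ∧ l.prod = g⁻¹ * g' ∧ l.length ≤ N ∧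
      ∀ m : ℕ, g * (l.take m).prod ∈ ball C n

/-- The least `n` such that `p^n * h` is an integer. -/
noncomputable def denomExp (p : ℤ) (h : ℚ) : ℕ :=
  sInf {n | ∃ m : ℤ, (p : ℚ) ^ n * h = (m : ℚ)}

/-- `denom h = |p|^n` for the least `n ≥ 0` with `p^n h ∈ ℤ`. -/
noncomputable def denom (p : ℤ) (h : ℚ) : ℚ := (|p| : ℚ) ^ denomExp p h

/-- The relator of the Baumslag–Solitar group `B(1,p)`: here `true` plays the role of
the generator `a` and `false` that of `t`, and the relator is `t⁻¹ a t (a^p)⁻¹`. -/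
def bsRels (p : ℤ) : Set (FreeGroup Bool) :=
  {(FreeGroup.of false)⁻¹ * FreeGroup.of true * FreeGroup.of false *
    (FreeGroup.of true ^ p)⁻¹}

/-- The Baumslag–Solitar group `B(1,p) = ⟨a, t ∣ t⁻¹ a t = a^p⟩`. -/
abbrev BSG (p : ℤ) := PresentedGroup (bsRels p)

/-- The generator `a` of `B(1,p)`. -/
def bsa (p : ℤ) : BSG p := PresentedGroup.of true

/-- The generator `t` of `B(1,p)`. -/
def bst (p : ℤ) : BSG p := PresentedGroup.of false

/-!
`S_k = g^k a g^{-k}` and `T_k = g^{-k} a g^k` (with `g = (f_*, c)`, `a = (1, 0)`) both lie in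
the abelian normal subgroup `ℤ[1/p]`, where the product of `(x, 0)` and `(y, 0)` is
`(x + y, 0)`; so `S_k T_k = T_k S_k = (p^{kc} + p^{-kc}, 0)`. In the word
`S_k T_k g^{-j} = g^k a g^{-2k} a g^{k-j}` every letter is a generator or a copy of `a`,
which gives the length bound `4k + 2ℓ - j`; `β_k` is the same word for `g⁻¹`, and
`α_k⁻¹ β_k = g^{2j}`.
-/

section WordMetric

variable {H : Type*} [Group H] {C : Set H}

lemma ball_mono {m n : ℕ} (h : m ≤ n) : ball C m ⊆ ball C n := by
  rintro g ⟨l, hlC, rfl, hl⟩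
  exact ⟨l, hlC, rfl, hl.trans h⟩

lemma mul_mem_ball {g h : H} {m n : ℕ} (hg : g ∈ ball C m) (hh : h ∈ ball C n) :
    g * h ∈ ball C (m + n) := by
  obtain ⟨l₁, hl₁C, rfl, hl₁⟩ := hg
  obtain ⟨l₂, hl₂C, rfl, hl₂⟩ := hh
  refine ⟨l₁ ++ l₂, fun x hx => ?_, List.prod_append, ?_⟩
  · rcases List.mem_append.1 hx with hx | hx
    exacts [hl₁C x hx, hl₂C x hx]
  · rw [List.length_append]
    omega

lemma pow_mem_ball {g : H} (hg : g ∈ C) (n : ℕ) : g ^ n ∈ ball C n :=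
  ⟨List.replicate n g, fun _ hx => List.eq_of_mem_replicate hx ▸ hg, List.prod_replicate n g,
    (List.length_replicate).le⟩

lemma mem_ball_wl (hgen : Generates C) (g : H) : g ∈ ball C (wl C g) := by
  obtain ⟨l, hlC, hl⟩ := hgen g
  exact Nat.sInf_mem (s := {n | g ∈ ball C n}) ⟨l.length, l, hlC, hl, le_rfl⟩

lemma conj_mul_conj_mul_inv_pow_mem_ball {g a : H} {ℓ j k : ℕ} (hg : g ∈ C) (hg' : g⁻¹ ∈ C)
    (ha : a ∈ ball C ℓ) (hjk : j ≤ k) :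
    g ^ k * a * (g ^ k)⁻¹ * ((g ^ k)⁻¹ * a * g ^ k) * g⁻¹ ^ j ∈ ball C (4 * k + 2 * ℓ - j) := by
  obtain ⟨m, rfl⟩ := Nat.exists_eq_add_of_le hjk
  have hword : g ^ (j + m) * a * (g ^ (j + m))⁻¹ * ((g ^ (j + m))⁻¹ * a * g ^ (j + m)) * g⁻¹ ^ j
      = g ^ (j + m) * a * g⁻¹ ^ (2 * (j + m)) * a * g ^ m := by
    group
  rw [hword]
  exact ball_mono (by omega) <| mul_mem_ball (mul_mem_ball (mul_mem_ball
    (mul_mem_ball (pow_mem_ball hg _) ha) (pow_mem_ball hg' _)) ha) (pow_mem_ball hg m)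

end WordMetric

section SemidirectProduct

variable {p : ℤ} [hF : Fact (1 < |p|)]

lemma pow_c (x : QZ p) (n : ℕ) : (x ^ n).c = n * x.c := by
  induction n with
  | zero => simp
  | succ n ih => rw [pow_succ, mul_c, ih]; push_cast; ring

lemma conj_one_zero (x : QZ p) : x * (⟨1, 0⟩ : QZ p) * x⁻¹ = ⟨(p : ℚ) ^ (-x.c), 0⟩ := by
  have hp := cast_ne_zero hF.out
  ext
  · simp only [mul_f, inv_f, mul_c, add_zero, mul_one, zpow_neg]
    field_simp
    ring
  · simp

lemma mk_zero_mul_mk_zero (x y : ℚ) : (⟨x, 0⟩ * ⟨y, 0⟩ : QZ p) = ⟨x + y, 0⟩ := by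
  ext <;> simp

end SemidirectProduct

theorem alpha_beta_in_ball_general (p : ℤ) [hF : Fact (1 < |p|)] (C : Set (HZ p))
    (hCsym : Symm C) (hCgen : Generates C)
    (c : ℤ) (gstar : HZ p) (hgC : gstar ∈ C) (hgc : ((gstar : QZ p)).c = c)
    (j : ℕ) (k : ℕ) (hkj : j < k) :
    ∀ ST : HZ p,
      ST = mk ((p : ℚ) ^ ((k : ℤ) * c) + (p : ℚ) ^ (-((k : ℤ) * c))) 0
        (add_mem (cast_ne_zero hF.out) (zpow_mem (cast_ne_zero hF.out) _)
          (zpow_mem (cast_ne_zero hF.out) _)) →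
      ST * (gstar⁻¹) ^ j ∈ ball C (4 * k + 2 * wl C (mk 1 0 (one_mem p)) - j) ∧
      ST * gstar ^ j ∈ ball C (4 * k + 2 * wl C (mk 1 0 (one_mem p)) - j) ∧
      (ST * (gstar⁻¹) ^ j)⁻¹ * (ST * gstar ^ j) ∈ ball C (2 * j) := by
  intro ST hST
  set a : HZ p := mk 1 0 (one_mem p)
  have hkc : ((gstar : QZ p) ^ k).c = k * c := by rw [pow_c, hgc]
  have hS : ((gstar ^ k * a * (gstar ^ k)⁻¹ : HZ p) : QZ p) = ⟨(p : ℚ) ^ (-(k * c)), 0⟩ := by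
    rw [← hkc]
    exact conj_one_zero _
  have hT : (((gstar ^ k)⁻¹ * a * gstar ^ k : HZ p) : QZ p) = ⟨(p : ℚ) ^ (k * c), 0⟩ := by
    have h := conj_one_zero ((gstar : QZ p) ^ k)⁻¹
    rw [inv_inv, inv_c, hkc, neg_neg] at h
    exact h
  have hST_eq : ST = gstar ^ k * a * (gstar ^ k)⁻¹ * ((gstar ^ k)⁻¹ * a * gstar ^ k) :=
    Subtype.ext <| by rw [Subgroup.coe_mul, hS, hT, mk_zero_mul_mk_zero, add_comm, hST]; rfl
  have hTS_eq : ST = (gstar ^ k)⁻¹ * a * gstar ^ k * (gstar ^ k * a * (gstar ^ k)⁻¹) :=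
    Subtype.ext <| by rw [Subgroup.coe_mul, hS, hT, mk_zero_mul_mk_zero, hST]; rfl
  have hgC' : gstar⁻¹ ∈ C := hCsym gstar hgC
  refine ⟨?_, ?_, ?_⟩
  · rw [hST_eq]
    exact conj_mul_conj_mul_inv_pow_mem_ball hgC hgC' (mem_ball_wl hCgen a) hkj.le
  · simpa only [hTS_eq, inv_pow, inv_inv] using conj_mul_conj_mul_inv_pow_mem_ball hgC'
      (by rwa [inv_inv]) (mem_ball_wl hCgen a) hkj.le
  · rw [show ∀ x : HZ p, (x * gstar⁻¹ ^ j)⁻¹ * (x * gstar ^ j) = gstar ^ (2 * j) by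
      intro x; group]
    exact pow_mem_ball hgC (2 * j)

/-- With `α_k = S_k T_k (f_*,c)^{−j}` and `β_k = T_k S_k (f_*,c)^{j}`, for `k > j` both
`α_k` and `β_k` lie in `B(4k + 2ℓ − j)` and are at distance at most `2j`. -/
theorem alpha_beta_in_ball (p : ℤ) [hF : Fact (1 < |p|)] (C : Set (HZ p))
    (hCfin : C.Finite) (hCsym : Symm C) (hCgen : Generates C)
    (c : ℤ) (hc : 0 < c) (gstar : HZ p) (hgC : gstar ∈ C) (hgc : ((gstar : QZ p)).c = c)
    (hmax : ∀ g ∈ C, ((g : QZ p)).c ≤ c)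
    (j : ℕ) (hj : 1 ≤ j) (k : ℕ) (hkj : j < k) :
    ∀ ST : HZ p,
      ST = mk ((p : ℚ) ^ ((k : ℤ) * c) + (p : ℚ) ^ (-((k : ℤ) * c))) 0
        (add_mem (cast_ne_zero hF.out) (zpow_mem (cast_ne_zero hF.out) _)
          (zpow_mem (cast_ne_zero hF.out) _)) →
      ST * (gstar⁻¹) ^ j ∈ ball C (4 * k + 2 * wl C (mk 1 0 (one_mem p)) - j) ∧
      ST * gstar ^ j ∈ ball C (4 * k + 2 * wl C (mk 1 0 (one_mem p)) - j) ∧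
      (ST * (gstar⁻¹) ^ j)⁻¹ * (ST * gstar ^ j) ∈ ball C (2 * j) :=
  alpha_beta_in_ball_general p (hF := hF) C hCsym hCgen c gstar hgC hgc j k hkj

end BS
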